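/- Let d ≥ 1 and let n_1 ≥ n_2 ≥ … ≥ n_d ≥ 0 be integers with ∑_{i=1}^d n_i = n ≥ 1. Define DimV = ( n! / ∏_{i=1}^d (n_i + d − i)! ) · ∏_{1 ≤ i < j ≤ d} (n_i − n_j + j − i). Then DimV ≥ (n + d)^{−d(d+1)/2} · exp( n · H(n_1/n, …, n_d/n) ), where H(q_1, …, q_d) = −∑_{i=1}^d q_i log q_i with the convention 0·log 0 = 0. -/

import Mathlib

open Finset

lemma my_pow_le_exp_mul_factorial (n : ℕ) : (n:ℝ)^n ≤ Real.exp n * n.factorial := by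
  induction n with
  | zero => simp
  | succ k ih =>
    have h0 : ((k:ℝ)+1)^k ≤ Real.exp 1 * (k:ℝ)^k := by
      rcases Nat.eq_zero_or_pos k with hk | hk
      · subst hk; simpa using Real.one_le_exp (by norm_num)
      · have hkR : (0:ℝ) < k := by exact_mod_cast hk
        have h1 : (1 + 1/(k:ℝ)) ≤ Real.exp (1/(k:ℝ)) := by
          have := Real.add_one_le_exp (1/(k:ℝ)); linarith
        have h2 : (1 + 1/(k:ℝ))^k ≤ Real.exp (1/(k:ℝ))^k :=
          pow_le_pow_left₀ (by positivity) h1 k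
        have h3 : Real.exp (1/(k:ℝ))^k = Real.exp 1 := by
          rw [← Real.exp_nat_mul]
          congr 1; field_simp
        have h4 : ((k:ℝ)+1)^k = (1 + 1/(k:ℝ))^k * (k:ℝ)^k := by
          rw [← mul_pow]; congr 1; field_simp
        rw [h4]
        calc (1 + 1/(k:ℝ))^k * (k:ℝ)^k ≤ Real.exp (1/(k:ℝ))^k * (k:ℝ)^k := by
              exact mul_le_mul_of_nonneg_right h2 (by positivity)
          _ = Real.exp 1 * (k:ℝ)^k := by rw [h3]
    have hcast : ((k+1 : ℕ) : ℝ) = (k:ℝ)+1 := by push_cast; ring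
    calc ((k+1:ℕ):ℝ)^(k+1) = ((k:ℝ)+1)^k * ((k:ℝ)+1) := by rw [hcast, pow_succ]
      _ ≤ (Real.exp 1 * (k:ℝ)^k) * ((k:ℝ)+1) := by
          apply mul_le_mul_of_nonneg_right h0 (by positivity)
      _ ≤ (Real.exp 1 * (Real.exp k * k.factorial)) * ((k:ℝ)+1) := by
          apply mul_le_mul_of_nonneg_right _ (by positivity)
          exact mul_le_mul_of_nonneg_left ih (Real.exp_pos 1).le
      _ = Real.exp ((k:ℝ)+1) * ((k+1:ℕ).factorial) := by
          rw [Real.exp_add]; push_cast [Nat.factorial_succ]; ring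
      _ = Real.exp ((k+1:ℕ):ℝ) * ((k+1:ℕ).factorial :ℝ) := by rw [hcast]

lemma my_factorial_le (n : ℕ) (hn : 1 ≤ n) :
    (n.factorial : ℝ) ≤ Real.exp 1 * Real.sqrt n * ((n:ℝ)/Real.exp 1)^n := by
  have h1 : Stirling.stirlingSeq n ≤ Stirling.stirlingSeq 1 := by
    obtain ⟨m, rfl⟩ : ∃ m, n = m + 1 := ⟨n - 1, by omega⟩
    exact Stirling.stirlingSeq'_antitone (Nat.zero_le m)
  rw [Stirling.stirlingSeq_one] at h1
  have hpos : (0:ℝ) < Real.sqrt (2*n) * ((n:ℝ)/Real.exp 1)^n := by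
    have : (0:ℝ) < n := by exact_mod_cast hn
    positivity
  have h2 : (n.factorial : ℝ)
      = Stirling.stirlingSeq n * (Real.sqrt (2*n) * ((n:ℝ)/Real.exp 1)^n) := by
    rw [Stirling.stirlingSeq, div_mul_cancel₀]
    exact hpos.ne'
  rw [h2]
  have h3 : Real.sqrt (2*(n:ℝ)) = Real.sqrt 2 * Real.sqrt n := Real.sqrt_mul (by norm_num) _
  calc Stirling.stirlingSeq n * (Real.sqrt (2*n) * ((n:ℝ)/Real.exp 1)^n)
      ≤ (Real.exp 1 / Real.sqrt 2) * (Real.sqrt (2*n) * ((n:ℝ)/Real.exp 1)^n) :=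
        mul_le_mul_of_nonneg_right h1 hpos.le
    _ = Real.exp 1 * Real.sqrt n * ((n:ℝ)/Real.exp 1)^n := by
        rw [h3]
        have h2 : Real.sqrt 2 ≠ 0 := by positivity
        field_simp

lemma my_key (m : ℕ) (A : ℝ) (h : (m:ℝ) + 2 ≤ A) :
    (m.factorial:ℝ) * Real.exp m ≤ A * (m:ℝ)^m := by
  rcases Nat.eq_zero_or_pos m with hm | hm
  · subst hm; simp; linarith
  · have hsq : Real.exp 1 * Real.sqrt m ≤ (m:ℝ) + 2 := by
      have hs : Real.sqrt m ^ 2 = (m:ℝ) := Real.sq_sqrt (by positivity)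
      have hsn : (0:ℝ) ≤ Real.sqrt m := Real.sqrt_nonneg _
      have he : Real.exp 1 < 2.7182818286 := Real.exp_one_lt_d9
      nlinarith [sq_nonneg (Real.sqrt m - 1.36), Real.exp_pos 1]
    have h1 := my_factorial_le m hm
    have hmul : (m.factorial:ℝ) * Real.exp m ≤
        (Real.exp 1 * Real.sqrt m * ((m:ℝ)/Real.exp 1)^m) * Real.exp m :=
      mul_le_mul_of_nonneg_right h1 (Real.exp_pos _).le
    have hkey : ((m:ℝ)/Real.exp 1)^m * Real.exp m = (m:ℝ)^m := by
      rw [div_pow, Real.exp_one_pow, div_mul_cancel₀]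
      exact (Real.exp_pos _).ne'
    calc (m.factorial:ℝ) * Real.exp m
        ≤ (Real.exp 1 * Real.sqrt m) * (((m:ℝ)/Real.exp 1)^m * Real.exp m) := by
          rw [← mul_assoc]; exact hmul
      _ = (Real.exp 1 * Real.sqrt m) * (m:ℝ)^m := by rw [hkey]
      _ ≤ A * (m:ℝ)^m := by
          apply mul_le_mul_of_nonneg_right (le_trans hsq h) (by positivity)

lemma my_exp_entropy (m : ℕ) (N : ℝ) (hN : 0 < N) :
    Real.exp ((m:ℝ)*(Real.log N - Real.log m)) = N^m / (m:ℝ)^m := by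
  rcases Nat.eq_zero_or_pos m with hm | hm
  · subst hm; simp
  · have hmR : (0:ℝ) < m := by exact_mod_cast hm
    rw [mul_sub, Real.exp_sub, ← Real.log_pow, ← Real.log_pow,
      Real.exp_log (by positivity), Real.exp_log (by positivity)]

lemma my_fact_add_le (m t A : ℕ) (h : m + t ≤ A) :
    (m+t).factorial ≤ m.factorial * A^t := by
  induction t with
  | zero => simp
  | succ s ih =>
    have h1 : m + s ≤ A := by omega
    calc (m+(s+1)).factorial = (m+s+1) * (m+s).factorial := by
          rw [show m+(s+1) = (m+s)+1 by ring, Nat.factorial_succ]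
      _ ≤ A * (m.factorial * A^s) := Nat.mul_le_mul (by omega) (ih h1)
      _ = m.factorial * A^(s+1) := by ring

lemma my_tri (d : ℕ) (hd : 1 ≤ d) : d*(d+1)/2 = d*(d-1)/2 + d := by
  obtain ⟨e, rfl⟩ : ∃ e, d = e + 1 := ⟨d-1, by omega⟩
  have h1 : (e+1)*(e+1+1) = (e+1)*e + 2*(e+1) := by ring
  rw [h1, Nat.succ_sub_one, Nat.add_mul_div_left _ _ (by norm_num : (0:ℕ) < 2)]

lemma my_one_le_prod {α : Type*} (s : Finset α) (g : α → ℝ) (h : ∀ i ∈ s, 1 ≤ g i) :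
    1 ≤ ∏ i ∈ s, g i := by
  calc (1:ℝ) = ∏ _i ∈ s, 1 := (Finset.prod_const_one).symm
    _ ≤ ∏ i ∈ s, g i := Finset.prod_le_prod (by intros; norm_num) h

/-- Dimension of the irreducible representation of `S_n` for Young index
`(n_1, …, n_d)` (0-indexed as `nv 0 ≥ … ≥ nv (d-1)`), via the explicit formula
`(n! / ∏ i (n_i + d − i)!) · ∏_{i<j} (n_i − n_j + j − i)`. -/
noncomputable def dimV {d : ℕ} (nv : Fin d → ℕ) (n : ℕ) : ℝ :=
  ((n.factorial : ℝ) / ∏ i : Fin d, ((nv i + (d - 1 - i.val)).factorial : ℝ)) *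
    ∏ i : Fin d, ∏ j ∈ Finset.univ.filter (fun j : Fin d => i < j),
      ((nv i : ℝ) - (nv j : ℝ) + (j.val : ℝ) - (i.val : ℝ))

theorem stmt_14 {d : ℕ} (hd : 1 ≤ d) (nv : Fin d → ℕ)
    (hanti : ∀ i j : Fin d, i ≤ j → nv j ≤ nv i)
    (n : ℕ) (hn : 1 ≤ n) (hsum : ∑ i, nv i = n) :
    ((n + d : ℕ) : ℝ) ^ (-(((d * (d + 1)) / 2 : ℕ) : ℤ)) *
      Real.exp ((n : ℝ) *
        (-∑ i, ((nv i : ℝ) / (n : ℝ)) * Real.log ((nv i : ℝ) / (n : ℝ))))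
    ≤ dimV nv n := by
  rcases eq_or_lt_of_le hd with hd1 | hd2
  · -- d = 1
    subst hd1
    have h0 : nv 0 = n := by simpa using hsum
    have hnR : (0:ℝ) < n := by exact_mod_cast hn
    have hdim : dimV nv n = 1 := by
      rw [dimV]
      have hfil : ∀ i : Fin 1, (Finset.univ.filter (fun j : Fin 1 => i < j)) = ∅ := by
        intro i
        apply Finset.filter_false_of_mem
        intro j _
        rw [Subsingleton.elim i j]
        exact lt_irrefl j
      simp only [hfil]
      simp [h0]
      exact Nat.factorial_ne_zero n
    rw [hdim]
    have hq : ((nv 0 : ℝ)/(n:ℝ)) = 1 := by rw [h0]; field_simp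
    simp only [Fin.sum_univ_one, hq, Real.log_one, mul_zero, neg_zero, Real.exp_zero, mul_one]
    rw [show (-(((1 * (1 + 1)) / 2 : ℕ) : ℤ)) = -1 by norm_num, zpow_neg, zpow_one]
    rw [inv_le_one₀ (by positivity)]
    exact_mod_cast Nat.le_add_left 1 n
  · -- d ≥ 2
    have hd2' : 2 ≤ d := hd2
    set N : ℝ := (n:ℝ) with hNdef
    have hN : (0:ℝ) < N := by rw [hNdef]; exact_mod_cast hn
    set X : ℝ := ((n+d : ℕ) : ℝ) with hXdef
    have hX : (0:ℝ) < X := by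
      rw [hXdef]
      have : 0 < n + d := by omega
      exact_mod_cast this
    have hle : ∀ i, nv i ≤ n := by
      intro i
      rw [← hsum]
      exact Finset.single_le_sum (fun j _ => Nat.zero_le _) (Finset.mem_univ i)
    have hXi : ∀ i, (nv i : ℝ) + 2 ≤ X := by
      intro i
      have h1 : nv i + 2 ≤ n + d := by have := hle i; omega
      calc (nv i:ℝ) + 2 = ((nv i + 2 : ℕ):ℝ) := by push_cast; ring
        _ ≤ ((n+d:ℕ):ℝ) := by exact_mod_cast h1
    have hH : N * (-∑ i, ((nv i : ℝ) / N) * Real.log ((nv i : ℝ) / N))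
        = ∑ i, (nv i:ℝ) * (Real.log N - Real.log (nv i)) := by
      rw [mul_neg, Finset.mul_sum, ← Finset.sum_neg_distrib]
      apply Finset.sum_congr rfl
      intro i _
      rcases Nat.eq_zero_or_pos (nv i) with h0 | h0
      · rw [h0]; simp
      · have hvR : (0:ℝ) < nv i := by exact_mod_cast h0
        rw [Real.log_div (ne_of_gt hvR) (ne_of_gt hN)]
        field_simp
        ring
    set P : ℝ := ∏ i, (nv i:ℝ)^(nv i) with hPdef
    set F : ℝ := ∏ i, ((nv i).factorial : ℝ) with hFdef
    have hP : 0 < P := by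
      apply Finset.prod_pos
      intro i _
      rcases Nat.eq_zero_or_pos (nv i) with h0|h0
      · rw [h0]; norm_num
      · have : (0:ℝ) < nv i := by exact_mod_cast h0
        positivity
    have hF : 0 < F := Finset.prod_pos (fun i _ => by
      exact_mod_cast (nv i).factorial_pos)
    have hE : Real.exp (N * (-∑ i, ((nv i : ℝ) / N) * Real.log ((nv i : ℝ) / N)))
        = N^n / P := by
      rw [hH, Real.exp_sum]
      have h1 : ∀ i ∈ Finset.univ, Real.exp ((nv i:ℝ) * (Real.log N - Real.log (nv i)))
          = N^(nv i) / (nv i:ℝ)^(nv i) := fun i _ => my_exp_entropy (nv i) N hN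
      rw [Finset.prod_congr rfl h1, Finset.prod_div_distrib, Finset.prod_pow_eq_pow_sum, hsum]
    have hPl : F * Real.exp N ≤ X^d * P := by
      have hexp : Real.exp N = ∏ i, Real.exp ((nv i : ℝ)) := by
        rw [← Real.exp_sum]
        congr 1
        rw [← Nat.cast_sum, hsum]
      calc F * Real.exp N = ∏ i, (((nv i).factorial : ℝ) * Real.exp (nv i)) := by
            rw [Finset.prod_mul_distrib, ← hexp]
        _ ≤ ∏ i, (X * (nv i:ℝ)^(nv i)) := by
            apply Finset.prod_le_prod
            · intro i _; positivity
            · intro i _; exact my_key (nv i) X (hXi i)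
        _ = X^d * P := by
            rw [Finset.prod_mul_distrib, Finset.prod_const, Finset.card_univ, Fintype.card_fin]
    have hNn : N^n ≤ Real.exp N * (n.factorial:ℝ) := my_pow_le_exp_mul_factorial n
    have hsumt : ∑ i : Fin d, (d - 1 - i.val) = d*(d-1)/2 := by
      rw [Fin.sum_univ_eq_sum_range (fun i => d - 1 - i) d]
      calc ∑ i ∈ Finset.range d, (d-1-i) = ∑ i ∈ Finset.range d, i :=
            Finset.sum_range_reflect (fun j => j) d
        _ = d*(d-1)/2 := Finset.sum_range_id d
    have hGn : (∏ i : Fin d, (nv i + (d - 1 - i.val)).factorial)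
        ≤ (∏ i : Fin d, (nv i).factorial) * (n+d)^(d*(d-1)/2) := by
      calc ∏ i : Fin d, (nv i + (d - 1 - i.val)).factorial
          ≤ ∏ i : Fin d, ((nv i).factorial * (n+d)^(d - 1 - i.val)) := by
            apply Finset.prod_le_prod'
            intro i _
            exact my_fact_add_le (nv i) (d-1-i.val) (n+d) (by have := hle i; omega)
        _ = (∏ i : Fin d, (nv i).factorial) * (n+d)^(∑ i : Fin d, (d-1-i.val)) := by
            rw [Finset.prod_mul_distrib, Finset.prod_pow_eq_pow_sum]
        _ = _ := by rw [hsumt]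
    have hG0 : (0:ℝ) < ∏ i : Fin d, ((nv i + (d - 1 - i.val)).factorial : ℝ) :=
      Finset.prod_pos (fun i _ => by exact_mod_cast (nv i + (d-1-i.val)).factorial_pos)
    have hGR : (∏ i : Fin d, ((nv i + (d - 1 - i.val)).factorial : ℝ))
        ≤ F * X^(d*(d-1)/2) := by
      calc (∏ i : Fin d, ((nv i + (d - 1 - i.val)).factorial : ℝ))
          = ((∏ i : Fin d, (nv i + (d - 1 - i.val)).factorial : ℕ) : ℝ) := by push_cast; rfl
        _ ≤ (((∏ i : Fin d, (nv i).factorial) * (n+d)^(d*(d-1)/2) : ℕ) : ℝ) := by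
            exact_mod_cast hGn
        _ = F * X^(d*(d-1)/2) := by rw [hFdef, hXdef]; push_cast; rfl
    have hV : 1 ≤ ∏ i : Fin d, ∏ j ∈ Finset.univ.filter (fun j : Fin d => i < j),
        ((nv i : ℝ) - (nv j : ℝ) + (j.val : ℝ) - (i.val : ℝ)) := by
      apply my_one_le_prod
      intro i _
      apply my_one_le_prod
      intro j hj
      rw [Finset.mem_filter] at hj
      have hij : i < j := hj.2
      have h1 : nv j ≤ nv i := hanti i j hij.le
      have h2 : i.val + 1 ≤ j.val := hij
      have h1R : (nv j : ℝ) ≤ nv i := by exact_mod_cast h1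
      have h2R : (i.val : ℝ) + 1 ≤ j.val := by exact_mod_cast h2
      linarith
    rw [dimV, hE]
    have hstep : X ^ (-((d*(d+1)/2 : ℕ) : ℤ)) * (N^n/P)
        ≤ (n.factorial : ℝ) / (∏ i : Fin d, ((nv i + (d - 1 - i.val)).factorial : ℝ)) := by
      rw [zpow_neg, zpow_natCast, inv_mul_le_iff₀ (by positivity), ← mul_div_assoc,
        div_le_div_iff₀ hP hG0]
      calc N^n * (∏ i : Fin d, ((nv i + (d - 1 - i.val)).factorial : ℝ))
          ≤ N^n * (F * X^(d*(d-1)/2)) :=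
            mul_le_mul_of_nonneg_left hGR (by positivity)
        _ ≤ (Real.exp N * n.factorial) * (F * X^(d*(d-1)/2)) :=
            mul_le_mul_of_nonneg_right hNn (by positivity)
        _ = ((n.factorial:ℝ) * X^(d*(d-1)/2)) * (F * Real.exp N) := by ring
        _ ≤ ((n.factorial:ℝ) * X^(d*(d-1)/2)) * (X^d * P) := by
            apply mul_le_mul_of_nonneg_left hPl
            positivity
        _ = X^(d*(d-1)/2 + d) * (n.factorial:ℝ) * P := by rw [pow_add]; ring
        _ = X^(d*(d+1)/2) * (n.factorial:ℝ) * P := by rw [my_tri d hd]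
    calc X ^ (-((d*(d+1)/2 : ℕ) : ℤ)) * (N^n/P)
        ≤ (n.factorial : ℝ) / (∏ i : Fin d, ((nv i + (d - 1 - i.val)).factorial : ℝ)) := hstep
      _ ≤ ((n.factorial : ℝ) / (∏ i : Fin d, ((nv i + (d - 1 - i.val)).factorial : ℝ))) *
          (∏ i : Fin d, ∏ j ∈ Finset.univ.filter (fun j : Fin d => i < j),
            ((nv i : ℝ) - (nv j : ℝ) + (j.val : ℝ) - (i.val : ℝ))) :=
        le_mul_of_one_le_right (by positivity) hV
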